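/- Let b > 0 and let f(x) = exp(−|x|/b)/(2b) be the density of the centered Laplace distribution with scale b. Then −∫_ℝ f(x) log₂(|x| · f(x)) dx = 1 + (1 + γ)/ln 2, where γ is the Euler–Mascheroni constant. In particular this value does not depend on b. -/

import Mathlib

open Real MeasureTheory

/-! Substituting `x = b y` shows that the floating-point entropy is invariant under rescaling a
density, because `|x| f(x)` is. For the standard Laplace density `e^{-|x|}/2`, folding the
integral onto `(0, ∞)` leaves `∫₀^∞ (log t - t - log 2) e^{-t} dt / log 2`, and
`∫₀^∞ log t · e^{-t} dt = Γ'(1) = -γ`. -/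

open Set Filter

noncomputable def fpEntropy (f : ℝ → ℝ) : ℝ :=
  -∫ x, f x * logb 2 (|x| * f x)

theorem fpEntropy_comp_div {b : ℝ} (hb : 0 < b) (g : ℝ → ℝ) :
    fpEntropy (fun x => g (x / b) / b) = fpEntropy g := by
  have hscale (x : ℝ) : g (x / b) / b * logb 2 (|x| * (g (x / b) / b))
      = g (x / b) * logb 2 (|x / b| * g (x / b)) / b := by
    rw [abs_div, abs_of_pos hb]
    ring_nf
  simp only [fpEntropy, hscale, integral_div,
    Measure.integral_comp_div (fun y => g y * logb 2 (|y| * g y)), abs_of_pos hb, smul_eq_mul]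
  field_simp

theorem integral_log_mul_exp_neg_Ioi :
    ∫ t in Ioi (0 : ℝ), log t * exp (-t) = -eulerMascheroniConstant := by
  have hGammaIntegral : HasDerivAt Complex.GammaIntegral
      ((∫ t in Ioi (0 : ℝ), log t * exp (-t) : ℝ) : ℂ) 1 := by
    convert Complex.hasDerivAt_GammaIntegral (s := 1) (by norm_num) using 1
    rw [← integral_complex_ofReal]
    refine setIntegral_congr_fun measurableSet_Ioi fun t _ => ?_
    simp
  have hGamma : HasDerivAt Gamma (∫ t in Ioi (0 : ℝ), log t * exp (-t)) 1 := by
    have hre : HasDerivAt (fun x : ℝ => (Complex.GammaIntegral x).re)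
        (∫ t in Ioi (0 : ℝ), log t * exp (-t)) 1 := by
      simpa using hGammaIntegral.real_of_complex
    refine hre.congr_of_eventuallyEq ?_
    filter_upwards [eventually_gt_nhds one_pos] with x hx
    rw [Gamma_eq_integral hx, Complex.GammaIntegral_ofReal, Complex.ofReal_re]
  exact hGamma.unique hasDerivAt_Gamma_one

theorem integral_mul_exp_neg_Ioi : ∫ t in Ioi (0 : ℝ), t * exp (-t) = 1 := by
  have hGamma_two := Gamma_eq_integral two_pos
  norm_num [Gamma_two] at hGamma_two
  rw [hGamma_two]
  exact setIntegral_congr_fun measurableSet_Ioi fun t _ => mul_comm _ _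

theorem integral_log_sub_self_sub_mul_exp_neg_Ioi (c : ℝ) :
    ∫ t in Ioi (0 : ℝ), (log t - t - c) * exp (-t) = -eulerMascheroniConstant - 1 - c := by
  have hγ : eulerMascheroniConstant ≠ 0 :=
    (one_half_lt_eulerMascheroniConstant.trans' (by norm_num)).ne'
  -- Each piece has a nonzero integral, so it cannot be the junk value of a non-integrable function.
  have hlog : IntegrableOn (fun t => log t * exp (-t)) (Ioi 0) :=
    .of_integral_ne_zero (by rwa [integral_log_mul_exp_neg_Ioi, neg_ne_zero])
  have hid : IntegrableOn (fun t => t * exp (-t)) (Ioi 0) :=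
    .of_integral_ne_zero (by rw [integral_mul_exp_neg_Ioi]; exact one_ne_zero)
  have hexp : IntegrableOn (fun t => exp (-t)) (Ioi 0) :=
    .of_integral_ne_zero (by rw [integral_exp_neg_Ioi_zero]; exact one_ne_zero)
  simp only [sub_mul]
  rw [integral_sub (f := fun t => log t * exp (-t) - t * exp (-t)) (hlog.sub hid)
      (hexp.const_mul c), integral_sub hlog hid,
    integral_log_mul_exp_neg_Ioi, integral_mul_exp_neg_Ioi, integral_const_mul,
    integral_exp_neg_Ioi_zero, mul_one]

theorem fpEntropy_laplace_std :
    fpEntropy (fun x => exp (-|x|) / 2) = 1 + (1 + eulerMascheroniConstant) / log 2 := by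
  have hlog2 : log 2 ≠ 0 := (log_pos one_lt_two).ne'
  have hfold (t : ℝ) (ht : t ∈ Ioi 0) : exp (-t) / 2 * logb 2 (t * (exp (-t) / 2))
      = (log t - t - log 2) * exp (-t) / (2 * log 2) := by
    rw [logb, log_mul (ne_of_gt ht) (by positivity), log_div (by positivity) two_ne_zero, log_exp]
    field_simp
    ring
  rw [fpEntropy, integral_comp_abs (f := fun t => exp (-t) / 2 * logb 2 (t * (exp (-t) / 2))),
    setIntegral_congr_fun measurableSet_Ioi hfold, integral_div,
    integral_log_sub_self_sub_mul_exp_neg_Ioi]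
  field_simp
  ring

/-- Differential floating-point entropy of the centered Laplace
distribution. -/
theorem fp_entropy_laplace
    (b : ℝ) (hb : 0 < b)
    (f : ℝ → ℝ)
    (hf : ∀ x, f x = Real.exp (-|x| / b) / (2 * b)) :
    -∫ x, f x * Real.logb 2 (|x| * f x)
      = 1 + (1 + Real.eulerMascheroniConstant) / Real.log 2 := by
  have hf_rescaled : f = fun x => exp (-|x / b|) / 2 / b := by
    ext x
    rw [hf, abs_div, abs_of_pos hb, neg_div, div_div]
  rw [← fpEntropy, hf_rescaled, fpEntropy_comp_div hb (fun y => exp (-|y|) / 2),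
    fpEntropy_laplace_std]
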